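/- For every Riccati solution X and every x₀ ∈ ℝ^n for which there exists an admissible pair (u, x) with initial state x₀ satisfying the feedback law u(t) = −(1/λ)·B̂(t)ᵀ X(t) M(t) x(t) for all t ∈ [0,T], the quadratic form of the Riccati solution at the initial time is nonnegative: x₀ᵀ M(0)ᵀ X(0) M(0) x₀ ≥ 0. -/

import Mathlib

open Matrix Set MeasureTheory

noncomputable section

/-- Entrywise continuity on a set for matrix-valued functions of one real variable. -/
def MatContOn {a b : ℕ} (f : ℝ → Matrix (Fin a) (Fin b) ℝ) (s : Set ℝ) : Prop :=
  ∀ i j, ContinuousOn (fun t => f t i j) s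

/-- The quadratic cost functional `J(u, x)`, with Euclidean norms written via dot products. -/
def cost {n m r : ℕ} (lam T : ℝ) (C : ℝ → Matrix (Fin r) (Fin n) ℝ)
    (u : ℝ → Fin m → ℝ) (x : ℝ → Fin n → ℝ) : ℝ :=
  (1 / 2) * ∫ t in (0:ℝ)..T,
    ((C t).mulVec (x t) ⬝ᵥ (C t).mulVec (x t) + lam * (u t ⬝ᵥ u t))

/-- An admissible control/state pair with initial state `x₀`: `u` continuous, `x`
differentiable on `[0, T]` with `M(t) x'(t) = A(t) x(t) + B(t) u(t)` and `x(0) = x₀`. -/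
structure Admissible {n m : ℕ} (T : ℝ) (M A : ℝ → Matrix (Fin n) (Fin n) ℝ)
    (B : ℝ → Matrix (Fin n) (Fin m) ℝ) (x₀ : Fin n → ℝ)
    (u : ℝ → Fin m → ℝ) (x : ℝ → Fin n → ℝ) : Prop where
  u_cont : ∀ i, ContinuousOn (fun t => u t i) (Icc 0 T)
  dyn : ∃ x' : ℝ → Fin n → ℝ,
    (∀ t ∈ Icc (0:ℝ) T, ∀ i, HasDerivWithinAt (fun s => x s i) (x' t i) (Icc (0:ℝ) T) t) ∧
    (∀ t ∈ Icc (0:ℝ) T, (M t).mulVec (x' t) = (A t).mulVec (x t) + (B t).mulVec (u t))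
  init : x 0 = x₀

/-- A solution of the generalized differential Riccati equation: continuous, symmetric,
`t ↦ M(t)ᵀ X(t) M(t)` differentiable on `[0, T]`, terminal value `X(T) = 0`, and the
generalized DRE holds on `[0, T]`. -/
structure RiccatiSol {n m r : ℕ} (T lam : ℝ) (M A : ℝ → Matrix (Fin n) (Fin n) ℝ)
    (B : ℝ → Matrix (Fin n) (Fin m) ℝ) (C : ℝ → Matrix (Fin r) (Fin n) ℝ)
    (X : ℝ → Matrix (Fin n) (Fin n) ℝ) : Prop where
  cont : MatContOn X (Icc 0 T)
  symm : ∀ t ∈ Icc (0:ℝ) T, (X t)ᵀ = X t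
  terminal : X T = 0
  riccati : ∃ Y : ℝ → Matrix (Fin n) (Fin n) ℝ,
    (∀ t ∈ Icc (0:ℝ) T, ∀ i j,
      HasDerivWithinAt (fun s => ((M s)ᵀ * X s * M s) i j) (Y t i j) (Icc (0:ℝ) T) t) ∧
    (∀ t ∈ Icc (0:ℝ) T,
      -(Y t) = (C t)ᵀ * C t + (A t)ᵀ * X t * M t + (M t)ᵀ * X t * A t
        - (1 / lam) • ((M t)ᵀ * X t * B t * (B t)ᵀ * X t * M t))

/-! Along the closed loop, `V t = x(t) ⬝ᵥ (Mᵀ X M)(t) x(t)` has derivative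
`-(‖C x‖² + λ ‖u‖²)`: the Riccati equation, with the feedback `u = -(1/λ) Bᵀ X M x`, completes the
square. Hence `V` is antitone on `[0, T]`, and `X T = 0` gives `V 0 ≥ V T = 0`. -/

section QuadraticForm

variable {ι κ ρ : Type*} [Fintype ι] [Fintype κ] [Fintype ρ]

theorem dotProduct_transpose_mulVec_eq_mulVec_dotProduct (A : Matrix κ ι ℝ) (v : ι → ℝ)
    (w : κ → ℝ) : v ⬝ᵥ Aᵀ *ᵥ w = A *ᵥ v ⬝ᵥ w := by
  rw [dotProduct_mulVec, vecMul_transpose]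

theorem hasDerivWithinAt_dotProduct_mulVec {x : ℝ → ι → ℝ} {x' : ι → ℝ}
    {P : ℝ → Matrix ι ι ℝ} {P' : Matrix ι ι ℝ} {s : Set ℝ} {t : ℝ}
    (hx : ∀ i, HasDerivWithinAt (fun τ => x τ i) (x' i) s t)
    (hP : ∀ i j, HasDerivWithinAt (fun τ => P τ i j) (P' i j) s t) :
    HasDerivWithinAt (fun τ => x τ ⬝ᵥ P τ *ᵥ x τ)
      (x' ⬝ᵥ P t *ᵥ x t + x t ⬝ᵥ (P' *ᵥ x t + P t *ᵥ x')) s t := by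
  have key : HasDerivWithinAt (fun τ => ∑ i, x τ i * ∑ j, P τ i j * x τ j)
      (∑ i, (x' i * ∑ j, P t i j * x t j + x t i * ∑ j, (P' i j * x t j + P t i j * x' j))) s t :=
    HasDerivWithinAt.fun_sum fun i _ =>
      (hx i).mul (HasDerivWithinAt.fun_sum fun j _ => (hP i j).mul (hx j))
  simpa only [dotProduct, mulVec, Pi.add_apply, Finset.mul_sum, mul_add, Finset.sum_add_distrib]
    using key

theorem riccati_feedback_derivative_eq_neg_running_cost (lam : ℝ) {M A X Y : Matrix ι ι ℝ}
    {B : Matrix ι κ ℝ} {C : Matrix ρ ι ℝ} (hX : Xᵀ = X)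
    (hY : -Y = Cᵀ * C + Aᵀ * X * M + Mᵀ * X * A - (1 / lam) • (Mᵀ * X * B * Bᵀ * X * M))
    {v w : ι → ℝ} {u : κ → ℝ} (hdyn : M *ᵥ w = A *ᵥ v + B *ᵥ u)
    (hu : u = -((1 / lam) • (Bᵀ * X * M) *ᵥ v)) :
    w ⬝ᵥ (Mᵀ * X * M) *ᵥ v + v ⬝ᵥ (Y *ᵥ v + (Mᵀ * X * M) *ᵥ w)
      = -(C *ᵥ v ⬝ᵥ C *ᵥ v + lam * (u ⬝ᵥ u)) := by
  have hXsymm : ∀ a b, a ⬝ᵥ X *ᵥ b = b ⬝ᵥ X *ᵥ a := fun a b => by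
    rw [← dotProduct_transpose_mulVec, hX]
  have hgram : Mᵀ * X * B * Bᵀ * X * M = (Bᵀ * X * M)ᵀ * (Bᵀ * X * M) := by
    simp only [transpose_mul, transpose_transpose, hX, Matrix.mul_assoc]
  rw [← neg_neg Y, hY, hgram]
  subst hu
  simp only [neg_mulVec, add_mulVec, sub_mulVec, smul_mulVec, ← mulVec_mulVec, mulVec_neg,
    mulVec_smul, dotProduct_neg, dotProduct_add, dotProduct_sub, dotProduct_smul, neg_dotProduct,
    smul_dotProduct, dotProduct_transpose_mulVec_eq_mulVec_dotProduct, hdyn, mulVec_add,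
    add_dotProduct, smul_eq_mul]
  rw [hXsymm (M *ᵥ v) (A *ᵥ v), hXsymm (M *ᵥ v)]
  have hinv : lam * (1 / lam) * (1 / lam) = 1 / lam := by
    simpa only [one_div, inv_inv, mul_comm lam⁻¹ lam] using mul_inv_mul_cancel lam⁻¹
  linear_combination (B *ᵥ Bᵀ *ᵥ X *ᵥ M *ᵥ v ⬝ᵥ X *ᵥ M *ᵥ v) * hinv

end QuadraticForm

theorem riccati_feedback_value_antitoneOn {n m r : ℕ} {T lam : ℝ} (hlam : 0 ≤ lam)
    {M A : ℝ → Matrix (Fin n) (Fin n) ℝ} {B : ℝ → Matrix (Fin n) (Fin m) ℝ}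
    {C : ℝ → Matrix (Fin r) (Fin n) ℝ} {X : ℝ → Matrix (Fin n) (Fin n) ℝ}
    (hX : RiccatiSol T lam M A B C X) {x₀ : Fin n → ℝ} {u : ℝ → Fin m → ℝ} {x : ℝ → Fin n → ℝ}
    (hadm : Admissible T M A B x₀ u x)
    (hu : ∀ t ∈ Icc (0:ℝ) T, u t = -((1 / lam) • ((B t)ᵀ * X t * M t) *ᵥ x t)) :
    AntitoneOn (fun t => x t ⬝ᵥ ((M t)ᵀ * X t * M t) *ᵥ x t) (Icc 0 T) := by
  obtain ⟨x', hx', hdyn⟩ := hadm.dyn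
  obtain ⟨Y, hY, hric⟩ := hX.riccati
  have hV : ∀ t ∈ Icc 0 T, HasDerivWithinAt (fun t => x t ⬝ᵥ ((M t)ᵀ * X t * M t) *ᵥ x t)
      (-(C t *ᵥ x t ⬝ᵥ C t *ᵥ x t + lam * (u t ⬝ᵥ u t))) (Icc 0 T) t := fun t ht => by
    rw [← riccati_feedback_derivative_eq_neg_running_cost lam (hX.symm t ht) (hric t ht)
      (hdyn t ht) (hu t ht)]
    exact hasDerivWithinAt_dotProduct_mulVec (hx' t ht) (hY t ht)
  refine antitoneOn_of_hasDerivWithinAt_nonpos (convex_Icc 0 T)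
    (fun t ht => (hV t ht).continuousWithinAt)
    (fun t ht => (hV t (interior_subset ht)).mono interior_subset) fun t _ => ?_
  have hCx : 0 ≤ C t *ᵥ x t ⬝ᵥ C t *ᵥ x t := Finset.sum_nonneg fun _ _ => mul_self_nonneg _
  have hu2 : 0 ≤ u t ⬝ᵥ u t := Finset.sum_nonneg fun _ _ => mul_self_nonneg _
  exact neg_nonpos.2 (add_nonneg hCx (mul_nonneg hlam hu2))

theorem riccati_initial_quadratic_form_nonneg_general {n m r : ℕ} (T lam : ℝ) (hT : 0 < T)
    (hlam : 0 < lam)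
    (M A : ℝ → Matrix (Fin n) (Fin n) ℝ) (B : ℝ → Matrix (Fin n) (Fin m) ℝ)
    (C : ℝ → Matrix (Fin r) (Fin n) ℝ)
    (X : ℝ → Matrix (Fin n) (Fin n) ℝ) (hX : RiccatiSol T lam M A B C X)
    (x₀ : Fin n → ℝ)
    (hfb : ∃ (u : ℝ → Fin m → ℝ) (x : ℝ → Fin n → ℝ), Admissible T M A B x₀ u x ∧
      ∀ t ∈ Icc (0:ℝ) T, u t = -((1 / lam) • ((B t)ᵀ * X t * M t).mulVec (x t))) :
    0 ≤ x₀ ⬝ᵥ ((M 0)ᵀ * X 0 * M 0).mulVec x₀ := by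
  obtain ⟨u, x, hadm, hu⟩ := hfb
  have hmono := riccati_feedback_value_antitoneOn hlam.le hX hadm hu
    (left_mem_Icc.2 hT.le) (right_mem_Icc.2 hT.le) hT.le
  simpa [hX.terminal, hadm.init] using hmono

/-- Nonnegativity of the Riccati quadratic form at the initial time, for any initial
state from which a feedback-controlled admissible trajectory exists. -/
theorem riccati_initial_quadratic_form_nonneg {n m r : ℕ} (T lam : ℝ) (hT : 0 < T)
    (hlam : 0 < lam)
    (M A : ℝ → Matrix (Fin n) (Fin n) ℝ) (B : ℝ → Matrix (Fin n) (Fin m) ℝ)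
    (C : ℝ → Matrix (Fin r) (Fin n) ℝ)
    (hM : MatContOn M (Icc 0 T)) (hA : MatContOn A (Icc 0 T))
    (hB : MatContOn B (Icc 0 T)) (hC : MatContOn C (Icc 0 T))
    (X : ℝ → Matrix (Fin n) (Fin n) ℝ) (hX : RiccatiSol T lam M A B C X)
    (x₀ : Fin n → ℝ)
    (hfb : ∃ (u : ℝ → Fin m → ℝ) (x : ℝ → Fin n → ℝ), Admissible T M A B x₀ u x ∧
      ∀ t ∈ Icc (0:ℝ) T, u t = -((1 / lam) • ((B t)ᵀ * X t * M t).mulVec (x t))) :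
    0 ≤ x₀ ⬝ᵥ ((M 0)ᵀ * X 0 * M 0).mulVec x₀ :=
  riccati_initial_quadratic_form_nonneg_general T lam hT hlam M A B C X hX x₀ hfb
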